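/- Let A be a layered automaton over a finite alphabet Σ, p a leaf state of A, and x a priority with x ≤ layer of p. If x is even and an infinite word w is strongly accepted by μ̂_x(p), then w ∈ L(⟦A⟧,p). Analogously, if x is odd and w is strongly rejected by μ̂_x(p), then w ∉ L(⟦A⟧,p). -/

import Mathlib

open scoped Classical

noncomputable section

/-! ### Infinite words and the parity condition -/

/-- The minimal value occurring infinitely often in a sequence of priorities;
for (eventually) bounded sequences this is the `liminf`. -/
def minInfOften (pi : ℕ → ℕ) : ℕ := sInf {x : ℕ | ∀ N : ℕ, ∃ n : ℕ, N ≤ n ∧ pi n = x}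

/-- The (min-)parity acceptance condition: the liminf of the priorities is even. -/
def ParityAccept (pi : ℕ → ℕ) : Prop := Even (minInfOften pi)

/-- Prepend a finite word to an infinite word. -/
def prependW {α : Type} (u : List α) (w : ℕ → α) : ℕ → α := fun i =>
  if h : i < u.length then u.get ⟨i, h⟩ else w (i - u.length)

/-- The prefix of length `n` of an infinite word, as a list. -/
def wordPrefix {α : Type} (w : ℕ → α) (n : ℕ) : List α := List.ofFn (fun i : Fin n => w i)

/-- Drop the first `n` letters of an infinite word. -/
def wordDrop {α : Type} (w : ℕ → α) (n : ℕ) : ℕ → α := fun i => w (n + i)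

/-- The periodic infinite word `v^ω` (junk if `v = []`). -/
def perWord {α : Type} [Inhabited α] (v : List α) : ℕ → α := fun i => v.getD (i % v.length) default

/-! ### Layered automata -/

/-- A layered automaton over the alphabet `α` with `d` layers.  The (disjoint) layers
are encoded by the function `layer : Q → [1,d]`; each layer is a deterministic
transition system (partial transition function `δ`, which stays inside the layer);
`μ` sends each state of layer `x+1` to its parent in layer `x` (and is the identity
on layer `1`) and is a morphism of transition systems; layer `1` is complete, carries
the initial state, and all its states are reachable from the initial state. -/
structure Layered (Q α : Type) (d : ℕ) where
  layer : Q → ℕ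
  layer_pos : ∀ q, 1 ≤ layer q
  layer_le : ∀ q, layer q ≤ d
  δ : Q → α → Option Q
  δ_layer : ∀ q a q', δ q a = some q' → layer q' = layer q
  μ : Q → Q
  μ_layer : ∀ q, 1 < layer q → layer (μ q) + 1 = layer q
  μ_id : ∀ q, layer q = 1 → μ q = q
  μ_morph : ∀ q a q', 1 < layer q → δ q a = some q' → δ (μ q) a = some (μ q')
  init : Q
  init_layer : layer init = 1
  complete1 : ∀ q a, layer q = 1 → (δ q a).isSome = true
  reach1 : ∀ q, layer q = 1 →
    Relation.ReflTransGen (fun p p' => layer p = 1 ∧ ∃ a, δ p a = some p') init q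

namespace Layered

variable {Q R α : Type} {d d' : ℕ}

/-- The run of the (deterministic) layer transition systems on a finite word. -/
def runList (A : Layered Q α d) : Q → List α → Option Q
  | q, [] => some q
  | q, a :: u =>
    match A.δ q a with
    | some q' => runList A q' u
    | none => none

/-- `μ̂_x q`: the ancestor of `q` in layer `x` (image under the composed morphisms). -/
def muHat (A : Layered Q α d) (x : ℕ) (q : Q) : Q := (A.μ)^[A.layer q - x] q

/-- A leaf state: a state that is not in the image of any of the morphisms `μ_x`. -/
def IsLeaf (A : Layered Q α d) (q : Q) : Prop := ∀ p, 1 < A.layer p → A.μ p ≠ q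

/-- `layer(q,a)`: the largest layer `x ≤ layer q` in which `δ_x (μ̂_x q) a` is defined. -/
def layerOf (A : Layered Q α d) (q : Q) (a : α) : ℕ :=
  Nat.findGreatest (fun x => (A.δ (A.muHat x q) a).isSome = true) (A.layer q)

/-- A state `p` is an ancestor of `q`. -/
def IsAncestor (A : Layered Q α d) (p q : Q) : Prop :=
  A.layer p ≤ A.layer q ∧ A.muHat (A.layer p) q = p

/-! #### Safe languages and strong acceptance -/

/-- Membership of a finite word in the `x`-safe language of `q`. -/
def SafeFin (A : Layered Q α d) (x : ℕ) (q : Q) (u : List α) : Prop :=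
  (A.runList (A.muHat x q) u).isSome = true

/-- Membership of an infinite word in the `x`-safe language of `q`. -/
def SafeInf (A : Layered Q α d) (x : ℕ) (q : Q) (w : ℕ → α) : Prop :=
  ∀ n : ℕ, A.SafeFin x q (wordPrefix w n)

/-- `w` is strongly accepted by the state `p` (which lies in the even layer `x = layer p`):
`w` is `x`-safe from `p` and no decomposition `w = u·w'` admits a state `p'` of layer `x+1`
with a `u`-run from `p` to the parent of `p'` in `T_x` such that `w'` is `(x+1)`-safe from `p'`. -/
def StronglyAcc (A : Layered Q α d) (p : Q) (w : ℕ → α) : Prop :=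
  Even (A.layer p) ∧ A.SafeInf (A.layer p) p w ∧
  ∀ (n : ℕ) (p' : Q), A.layer p' = A.layer p + 1 →
    A.runList p (wordPrefix w n) = some (A.μ p') →
    ¬ A.SafeInf (A.layer p') p' (wordDrop w n)

/-- `w` is strongly rejected by `p` (lying in an odd layer). -/
def StronglyRej (A : Layered Q α d) (p : Q) (w : ℕ → α) : Prop :=
  Odd (A.layer p) ∧ A.SafeInf (A.layer p) p w ∧
  ∀ (n : ℕ) (p' : Q), A.layer p' = A.layer p + 1 →
    A.runList p (wordPrefix w n) = some (A.μ p') →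
    ¬ A.SafeInf (A.layer p') p' (wordDrop w n)

/-- Consistency: no two states with the same layer-1 ancestor strongly accept
resp. strongly reject a common infinite word. -/
def Consistent (A : Layered Q α d) : Prop :=
  ¬ ∃ (p p' : Q) (w : ℕ → α), A.muHat 1 p = A.muHat 1 p' ∧
      A.StronglyAcc p w ∧ A.StronglyRej p' w

/-- `w` is ultimately safe in layer `x`, for the automaton started in the
layer-1 state `q0`. -/
def UltSafeFrom (A : Layered Q α d) (q0 : Q) (x : ℕ) (w : ℕ → α) : Prop :=
  ∃ (n : ℕ) (p : Q), A.layer p = x ∧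
    A.runList q0 (wordPrefix w n) = some (A.muHat 1 p) ∧
    A.SafeInf x p (wordDrop w n)

/-- Layered acceptance from `q0`: the maximal layer in which `w` is ultimately safe is even. -/
def LayeredAcceptFrom (A : Layered Q α d) (q0 : Q) (w : ℕ → α) : Prop :=
  ∃ x : ℕ, Even x ∧ A.UltSafeFrom q0 x w ∧ ∀ y : ℕ, A.UltSafeFrom q0 y w → y ≤ x

/-- Layered rejection from `q0`: the maximal layer in which `w` is ultimately safe is odd. -/
def LayeredRejectFrom (A : Layered Q α d) (q0 : Q) (w : ℕ → α) : Prop :=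
  ∃ x : ℕ, Odd x ∧ A.UltSafeFrom q0 x w ∧ ∀ y : ℕ, A.UltSafeFrom q0 y w → y ≤ x

/-! #### The semantics automaton `⟦A⟧` (a simple-by-priorities alternating parity automaton) -/

/-- The priority of the letter `a` in the state `q` of `⟦A⟧`. -/
def semPrio (A : Layered Q α d) (q : Q) (a : α) : ℕ := A.layerOf q a

/-- The transitions of `⟦A⟧` (between leaf states): `q —a→ q'` iff, for
`x = layer(q,a)`, we have `δ_x (μ̂_x q) a = μ̂_x q'`; the transition carries priority `x`. -/
def semStep (A : Layered Q α d) (q : Q) (a : α) (q' : Q) : Prop :=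
  A.IsLeaf q' ∧ A.δ (A.muHat (A.layerOf q a) q) a = some (A.muHat (A.layerOf q a) q')

/-- Runs of `⟦A⟧` over the infinite word `w`, starting in `p`. -/
def IsSemRun (A : Layered Q α d) (w : ℕ → α) (p : Q) (ρ : ℕ → Q) : Prop :=
  ρ 0 = p ∧ ∀ i : ℕ, A.semStep (ρ i) (w i) (ρ (i + 1))

/-- The sequence of priorities produced by a run of `⟦A⟧` over `w`. -/
def runPrios (A : Layered Q α d) (w : ℕ → α) (ρ : ℕ → Q) : ℕ → ℕ :=
  fun i => A.semPrio (ρ i) (w i)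

/-- A resolver for Eve in `⟦A⟧`: given the history (the finite run so far, as a list of
(state, letter) pairs), the current state and a letter of odd priority, it picks a successor. -/
def EveResolver (A : Layered Q α d) (σ : List (Q × α) → Q → α → Q) : Prop :=
  ∀ (h : List (Q × α)) (q : Q) (a : α), Odd (A.semPrio q a) → A.semStep q a (σ h q a)

/-- A resolver for Adam in `⟦A⟧` (resolving the even-priority steps). -/
def AdamResolver (A : Layered Q α d) (τ : List (Q × α) → Q → α → Q) : Prop :=
  ∀ (h : List (Q × α)) (q : Q) (a : α), Even (A.semPrio q a) → A.semStep q a (τ h q a)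

/-- A run is consistent with the Eve-resolver `σ`: every odd-priority step follows `σ`. -/
def ConsEve (A : Layered Q α d) (σ : List (Q × α) → Q → α → Q) (w : ℕ → α) (ρ : ℕ → Q) : Prop :=
  ∀ i : ℕ, Odd (A.semPrio (ρ i) (w i)) →
    ρ (i + 1) = σ (List.ofFn fun j : Fin i => (ρ (j : ℕ), w (j : ℕ))) (ρ i) (w i)

/-- A run is consistent with the Adam-resolver `τ`: every even-priority step follows `τ`. -/
def ConsAdam (A : Layered Q α d) (τ : List (Q × α) → Q → α → Q) (w : ℕ → α) (ρ : ℕ → Q) : Prop :=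
  ∀ i : ℕ, Even (A.semPrio (ρ i) (w i)) →
    ρ (i + 1) = τ (List.ofFn fun j : Fin i => (ρ (j : ℕ), w (j : ℕ))) (ρ i) (w i)

/-- Acceptance of `w` by `⟦A⟧` from the (leaf) state `p`: Eve has a winning strategy
in the game `G(⟦A⟧,w)`, i.e. a resolver all of whose consistent runs satisfy parity. -/
def SemAccept (A : Layered Q α d) (p : Q) (w : ℕ → α) : Prop :=
  ∃ σ : List (Q × α) → Q → α → Q, A.EveResolver σ ∧
    ∀ ρ : ℕ → Q, A.IsSemRun w p ρ → A.ConsEve σ w ρ → ParityAccept (A.runPrios w ρ)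

/-- Uniform semantic determinism: leaf states with the same layer-1 ancestor
recognise the same language in `⟦A⟧`. -/
def UnifSD (A : Layered Q α d) : Prop :=
  ∀ p q : Q, A.IsLeaf p → A.IsLeaf q → A.muHat 1 p = A.muHat 1 q →
    ∀ w : ℕ → α, (A.SemAccept p w ↔ A.SemAccept q w)

/-! #### Longest suffix resolvers -/

/-- `v` is a suffix-witness to `r`: the layer of `r` has a run labelled `v` ending in `r`. -/
def suffixReaches (A : Layered Q α d) (r : Q) (v : List α) : Prop :=
  ∃ p : Q, A.layer p = A.layer r ∧ A.runList p v = some r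

/-- The length of the longest suffix `v` of `u` such that the layer of `r` has a
run labelled `v` ending in `r`. -/
def longestSuffixLen (A : Layered Q α d) (u : List α) (r : Q) : ℕ :=
  Nat.findGreatest (fun k => k ≤ u.length ∧ A.suffixReaches r (u.drop (u.length - k))) u.length

/-- A longest suffix resolver for Eve, initialised to `u0`: a valid Eve-resolver that,
at a step of odd priority `x` after having read `v`, moves to an `a`-successor `q'`
maximising the length of the longest `(x+1)`-suffix of `u0·v·a` to `μ̂_{x+1} q'`. -/
def IsLongestSuffixResolverE (A : Layered Q α d) (u0 : List α)
    (σ : List (Q × α) → Q → α → Q) : Prop :=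
  A.EveResolver σ ∧
  ∀ (h : List (Q × α)) (q : Q) (a : α), Odd (A.semPrio q a) →
    ∀ q' : Q, A.semStep q a q' →
      A.longestSuffixLen (u0 ++ h.map Prod.snd ++ [a]) (A.muHat (A.semPrio q a + 1) q') ≤
      A.longestSuffixLen (u0 ++ h.map Prod.snd ++ [a]) (A.muHat (A.semPrio q a + 1) (σ h q a))

/-- A longest suffix resolver for Adam, initialised to `u0` (symmetric, for even priorities). -/
def IsLongestSuffixResolverA (A : Layered Q α d) (u0 : List α)
    (τ : List (Q × α) → Q → α → Q) : Prop :=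
  A.AdamResolver τ ∧
  ∀ (h : List (Q × α)) (q : Q) (a : α), Even (A.semPrio q a) →
    ∀ q' : Q, A.semStep q a q' →
      A.longestSuffixLen (u0 ++ h.map Prod.snd ++ [a]) (A.muHat (A.semPrio q a + 1) q') ≤
      A.longestSuffixLen (u0 ++ h.map Prod.snd ++ [a]) (A.muHat (A.semPrio q a + 1) (τ h q a))

/-! #### The random walk on `⟦A⟧` -/

/-- The uniform step probability of the random walk of `⟦A⟧`. -/
def stepProb (A : Layered Q α d) (q : Q) (a : α) (q' : Q) : ENNReal :=
  if A.semStep q a q' then ((Nat.card {p : Q // A.semStep q a p} : ENNReal))⁻¹ else 0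

/-- `m` is the Markov measure of the random walk of `⟦A⟧` over the word `w` started at `p`:
a probability measure on `ℕ → Q` whose cylinder probabilities are the products of the
uniform step probabilities. -/
def IsWalkMeasure [MeasurableSpace Q] (A : Layered Q α d) (w : ℕ → α) (p : Q)
    (m : MeasureTheory.Measure (ℕ → Q)) : Prop :=
  MeasureTheory.IsProbabilityMeasure m ∧
  ∀ (n : ℕ) (s : Fin (n + 1) → Q),
    m {ρ : ℕ → Q | ∀ i : Fin (n + 1), ρ (i : ℕ) = s i} =
      (if s 0 = p then 1 else 0) *
        ∏ i : Fin n, A.stepProb (s i.castSucc) (w (i : ℕ)) (s i.succ)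

/-! #### Normal form, centrality, safe minimality, central sequences -/

/-- Normal form: (N1) every layer `x ≥ 2` is a union of non-trivial SCCs, and
(N2) the safe language of every child is strictly smaller than that of its parent. -/
def NormalForm (A : Layered Q α d) : Prop :=
  ∀ q : Q, 2 ≤ A.layer q →
    (∀ (u : List α) (q' : Q), A.runList q u = some q' →
      ∃ v : List α, v ≠ [] ∧ A.runList q' v = some q) ∧
    (∀ p : Q, 1 < A.layer p → A.μ p = q →
      ∃ u : List α, (A.runList q u).isSome = true ∧ A.runList p u = none)

/-- Inclusion of `x`-safe languages. -/
def SafeLE (A : Layered Q α d) (x : ℕ) (p q : Q) : Prop :=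
  (∀ u : List α, A.SafeFin x p u → A.SafeFin x q u) ∧
  (∀ w : ℕ → α, A.SafeInf x p w → A.SafeInf x q w)

/-- Centralised: siblings (same parent) whose safe languages are included,
lie in the same SCC of their layer. -/
def Centralised (A : Layered Q α d) : Prop :=
  ∀ p q : Q, 2 ≤ A.layer p → A.layer q = A.layer p →
    A.muHat (A.layer p - 1) p = A.muHat (A.layer p - 1) q →
    A.SafeLE (A.layer p) p q →
    (∃ u : List α, A.runList p u = some q) ∧ (∃ v : List α, A.runList q v = some p)

/-- `L(p) = L(q)`: all leaves above (the layer-1 ancestor of) `p` and all leaves above `q`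
recognise the same language in `⟦A⟧`. -/
def LangEq1 (A : Layered Q α d) (p q : Q) : Prop :=
  ∀ l l' : Q, A.IsLeaf l → A.IsLeaf l' → A.muHat 1 l = A.muHat 1 p →
    A.muHat 1 l' = A.muHat 1 q → ∀ w : ℕ → α, (A.SemAccept l w ↔ A.SemAccept l' w)

/-- The equivalence `p ≈_x q`: language equivalence together with equality of all
`y`-safe languages for `2 ≤ y ≤ x`. -/
def ApproxEq (A : Layered Q α d) (x : ℕ) (p q : Q) : Prop :=
  A.LangEq1 p q ∧ ∀ y : ℕ, 2 ≤ y → y ≤ x →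
    ((∀ u : List α, A.SafeFin y p u ↔ A.SafeFin y q u) ∧
     (∀ w : ℕ → α, A.SafeInf y p w ↔ A.SafeInf y q w))

/-- Safe minimality: `≈_x`-equivalent states of the same layer are equal. -/
def SafeMinimal (A : Layered Q α d) : Prop :=
  ∀ p q : Q, A.layer p = A.layer q → A.ApproxEq (A.layer p) p q → p = q

/-- `z` is a central sequence for the state `p` (of layer `x = layer p`). -/
def IsCentralSeq (A : Layered Q α d) (p : Q) (z : List α) : Prop :=
  z ≠ [] ∧ A.runList p z = some p ∧
  (∀ q : Q, A.layer q = A.layer p →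
    A.muHat (A.layer p - 1) q = A.muHat (A.layer p - 1) p →
    (A.runList q z = some p ∨ A.runList q z = none)) ∧
  (∀ q' : Q, A.layer q' = A.layer p + 1 →
    A.muHat (A.layer p - 1) q' = A.muHat (A.layer p - 1) p →
    A.runList q' z = none)

end Layered

/-! ### Morphisms of layered automata -/

/-- A morphism of layered automata. -/
structure IsLayMorphism {Q R α : Type} {d d' : ℕ} (A : Layered Q α d) (B : Layered R α d')
    (φ : Q → R) : Prop where
  map_init : φ A.init = B.init
  map_step : ∀ q a q', A.δ q a = some q' → B.δ (φ q) a = some (φ q')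
  map_anc : ∀ p q, A.IsAncestor p q → B.IsAncestor (φ p) (φ q)

/-- A strong morphism of layered automata additionally preserves non-transitions. -/
def IsStrongLayMorphism {Q R α : Type} {d d' : ℕ} (A : Layered Q α d) (B : Layered R α d')
    (φ : Q → R) : Prop :=
  IsLayMorphism A B φ ∧ ∀ q a, A.δ q a = none → B.δ (φ q) a = none

/-- An isomorphism of layered automata: a bijection on states that restricts to
isomorphisms of the layer transition systems, preserves the initial state, and
commutes with the morphisms `μ`. -/
structure IsLayIso {Q R α : Type} {d d' : ℕ} (A : Layered Q α d) (B : Layered R α d')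
    (φ : Q ≃ R) : Prop where
  map_layer : ∀ q, B.layer (φ q) = A.layer q
  map_init : φ A.init = B.init
  map_mu : ∀ q, φ (A.μ q) = B.μ (φ q)
  map_step : ∀ q a, (A.δ q a).map φ = B.δ (φ q) a

/-- `L(⟦A⟧) = L(⟦B⟧)`: the semantics automata (with any choice of initial leaf states
above the respective initial states) accept the same infinite words. -/
def SemLangEq {Q R α : Type} {d d' : ℕ} (A : Layered Q α d) (B : Layered R α d') : Prop :=
  ∀ (p : Q) (q : R), A.IsLeaf p → A.muHat 1 p = A.init → B.IsLeaf q → B.muHat 1 q = B.init →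
    ∀ w : ℕ → α, (A.SemAccept p w ↔ B.SemAccept q w)

/-! ### Deterministic parity automata -/

/-- A deterministic parity automaton over `α` with priorities in `[1,d]`. -/
structure DPA (Q α : Type) (d : ℕ) where
  init : Q
  next : Q → α → Q
  prio : Q → α → ℕ
  prio_pos : ∀ q a, 1 ≤ prio q a
  prio_le : ∀ q a, prio q a ≤ d

namespace DPA

variable {Q α : Type} {d : ℕ}

/-- The unique run of a DPA on an infinite word. -/
def run (B : DPA Q α d) (w : ℕ → α) : ℕ → Q
  | 0 => B.init
  | n + 1 => B.next (run B w n) (w n)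

/-- Acceptance by a DPA: the priorities along the unique run satisfy parity. -/
def Accepts (B : DPA Q α d) (w : ℕ → α) : Prop :=
  ParityAccept (fun i => B.prio (B.run w i) (w i))

end DPA

/-- `L` is ω-regular: recognised by some deterministic parity automaton. -/
def IsOmegaRegular {α : Type} (L : Set (ℕ → α)) : Prop :=
  ∃ (n d : ℕ) (B : DPA (Fin n) α d), ∀ w : ℕ → α, w ∈ L ↔ B.Accepts w

/-! ### Nondeterministic coBüchi automata -/

/-- A (complete) nondeterministic coBüchi automaton: transitions carry priorities in `{1,2}`. -/
structure NCA (Q α : Type) where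
  init : Q
  trans : Q → α → ℕ → Q → Prop
  prio_mem : ∀ q a x q', trans q a x q' → x = 1 ∨ x = 2
  complete : ∀ q a, ∃ x q', trans q a x q'

namespace NCA

variable {Q α : Type}

/-- Nondeterministic acceptance from the state `q`. -/
def AcceptFrom (B : NCA Q α) (q : Q) (w : ℕ → α) : Prop :=
  ∃ (ρ : ℕ → Q) (pri : ℕ → ℕ), ρ 0 = q ∧
    (∀ i : ℕ, B.trans (ρ i) (w i) (pri i) (ρ (i + 1))) ∧ ParityAccept pri

/-- Semantic determinism: every `a`-successor of `p` recognises `a⁻¹ L(p)`. -/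
def SemDet (B : NCA Q α) : Prop :=
  ∀ p a x q, B.trans p a x q →
    ∀ w : ℕ → α, (B.AcceptFrom q w ↔ B.AcceptFrom p (prependW [a] w))

/-- Safe determinism: all `a`-transitions from a state carry the same priority, and
there is at most one `a`-transition of priority `2` from each state. -/
def SafeDet (B : NCA Q α) : Prop :=
  (∀ q a x q' x' q'', B.trans q a x q' → B.trans q a x' q'' → x = x') ∧
  (∀ q a q' q'', B.trans q a 2 q' → B.trans q a 2 q'' → q' = q'')

/-- 1-saturation: priority-1 transitions go to all language-equivalent states. -/
def OneSaturated (B : NCA Q α) : Prop :=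
  ∀ q a p p', B.trans q a 1 p →
    (∀ w : ℕ → α, (B.AcceptFrom p' w ↔ B.AcceptFrom p w)) → B.trans q a 1 p'

end NCA

/-! ### Simple-by-priorities alternating parity automata (abstract) -/

/-- A simple-by-priorities alternating parity automaton: a complete transition system
over `α × [1,d]` in which all `a`-transitions from a state carry the same priority. -/
structure SPA (Q α : Type) (d : ℕ) where
  init : Q
  step : Q → α → Q → Prop
  prio : Q → α → ℕ
  prio_pos : ∀ q a, 1 ≤ prio q a
  prio_le : ∀ q a, prio q a ≤ d
  complete : ∀ q a, ∃ q', step q a q'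

/-! ### The congruence on tuples of finite words -/

/-- The data of the congruence at one level (tuples of a fixed length,
represented as reversed lists of components: the head is the last component). -/
structure CongrLevel (α : Type) where
  bot : List (List α) → Prop
  eq : List (List α) → List (List α) → Prop
  ptd : List (List α) → Prop

/-- Concatenate a finite word to the last component of a tuple
(tuples are represented as reversed lists: the head is the last component). -/
def tcat {α : Type} (t : List (List α)) (v : List α) : List (List α) :=
  match t with
  | h :: rest => (h ++ v) :: rest
  | [] => []

/-- Merge the last two components of a tuple. -/
def tmerge {α : Type} (t : List (List α)) : List (List α) :=
  match t with
  | u' :: h :: rest => (h ++ u') :: rest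
  | t' => t'

/-- The congruence data at level `n` (handling tuples of length `n+1`), defined by
recursion on the level, following the inductive definition of `≈ ⊥`, `≈` and `pointed`. -/
def congrData {α : Type} [Inhabited α] (L : Set (ℕ → α)) : ℕ → CongrLevel α
  | 0 =>
    { bot := fun _ => False
      eq := fun t s =>
        match t, s with
        | [u], [v] => ∀ w : ℕ → α, (prependW u w ∈ L ↔ prependW v w ∈ L)
        | _, _ => False
      ptd := fun _ => True }
  | n + 1 =>
    let C := congrData L n
    let bot : List (List α) → Prop := fun t =>
      match t with
      | u' :: ubar =>
        C.bot (tmerge (u' :: ubar)) ∨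
        ∀ w : List α, w ≠ [] → C.eq (tcat (tmerge (u' :: ubar)) w) ubar →
          ((prependW ubar.reverse.flatten (perWord (u' ++ w)) ∈ L) ↔ Even (n + 1))
      | [] => True
    let eq : List (List α) → List (List α) → Prop := fun t s =>
      C.eq (tmerge t) (tmerge s) ∧ ∀ v : List α, (bot (tcat t v) ↔ bot (tcat s v))
    let ptd : List (List α) → Prop := fun t =>
      match t with
      | u' :: ubar =>
        ¬ bot (u' :: ubar) ∧ C.ptd ubar ∧
        ∀ (vbar : List (List α)) (v' : List α), vbar.length = n + 1 → C.ptd vbar →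
          C.eq (tcat vbar v') ubar → ¬ bot ((v' ++ u') :: vbar) →
          eq ((v' ++ u') :: vbar) (u' :: ubar)
      | [] => False
    { bot := bot, eq := eq, ptd := ptd }

/-- `t ≈ ⊥` (for a nonempty tuple `t`, in reversed representation). -/
def TupBot {α : Type} [Inhabited α] (L : Set (ℕ → α)) (t : List (List α)) : Prop :=
  (congrData L (t.length - 1)).bot t

/-- `t ≈ s` (for nonempty tuples of the same length, in reversed representation). -/
def TupEq {α : Type} [Inhabited α] (L : Set (ℕ → α)) (t s : List (List α)) : Prop :=
  t.length = s.length ∧ (congrData L (t.length - 1)).eq t s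

/-- `t` is pointed. -/
def TupPointed {α : Type} [Inhabited α] (L : Set (ℕ → α)) (t : List (List α)) : Prop :=
  (congrData L (t.length - 1)).ptd t

/-- `cls` exhibits `A` as (a copy of) the congruence automaton `A_≈` of `L`: its states
are the `≈`-classes of pointed tuples (the layer being the tuple length), transitions
are given by concatenation in the last component, the initial state is the class of
`(ε)`, and the morphisms are given by merging the last two components. -/
structure IsCongrAut {α : Type} [Inhabited α] (L : Set (ℕ → α)) {Q : Type} {d : ℕ}
    (A : Layered Q α d) (cls : (t : List (List α)) → TupPointed L t → Q) : Prop where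
  surj : ∀ q : Q, ∃ (t : List (List α)) (ht : TupPointed L t), cls t ht = q
  cls_eq : ∀ t ht s hs, cls t ht = cls s hs ↔ TupEq L t s
  layer_eq : ∀ t ht, A.layer (cls t ht) = t.length
  init_eq : ∀ h : TupPointed L [([] : List α)], cls [([] : List α)] h = A.init
  step_some : ∀ t ht (a : α) (h' : TupPointed L (tcat t [a])),
    A.δ (cls t ht) a = some (cls (tcat t [a]) h')
  step_none : ∀ t ht (a : α), TupBot L (tcat t [a]) → A.δ (cls t ht) a = none
  mu_eq : ∀ (u' : List α) (ubar : List (List α)) (h : TupPointed L (u' :: ubar))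
    (h' : TupPointed L (tmerge (u' :: ubar))), ubar ≠ [] →
    A.μ (cls (u' :: ubar) h) = cls (tmerge (u' :: ubar)) h'

end

/-!
Let `r = μ̂_x p` and `y = layer r`. Along any run of `⟦A⟧` from `p` over `w`, the layer-`y`
ancestors of the visited states follow the run of `T_y` from `r`, which is defined forever since
`w` is `y`-safe from `r`; hence every priority is at least `y`. If from some point on all
priorities were above `y`, the layer-`(y+1)` ancestors would form a safe run of `T_{y+1}` from a
child of a state reached by `r`, which strong acceptance (rejection) forbids. So every run has
minimal recurring priority exactly `y`, whatever the players choose: Eve wins with any strategy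
when `y` is even and loses against every strategy when `y` is odd.
-/

lemma wordPrefix_succ {α : Type} (w : ℕ → α) (n : ℕ) :
    wordPrefix w (n + 1) = wordPrefix w n ++ [w n] := by
  simp only [wordPrefix, List.ofFn_succ', List.concat_eq_append, Fin.val_castSucc, Fin.val_last]

lemma minInfOften_eq_of_le_of_frequently {π : ℕ → ℕ} {x : ℕ} (hle : ∀ n, x ≤ π n)
    (hfreq : ∀ N, ∃ n, N ≤ n ∧ π n = x) : minInfOften π = x :=
  le_antisymm (Nat.sInf_le hfreq) <| le_csInf ⟨x, hfreq⟩ fun y hy => by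
    obtain ⟨n, -, rfl⟩ := hy 0
    exact hle n

def historySeq {β γ : Type} (next : List (β × γ) → β → γ → β) (w : ℕ → γ) (p : β) : ℕ → β
  | 0 => p
  | n + 1 => next (List.ofFn fun j : Fin n => (historySeq next w p j, w j))
      (historySeq next w p n) (w n)
decreasing_by all_goals omega

lemma historySeq_zero {β γ : Type} (next : List (β × γ) → β → γ → β) (w : ℕ → γ) (p : β) :
    historySeq next w p 0 = p := by
  rw [historySeq]

lemma historySeq_succ {β γ : Type} (next : List (β × γ) → β → γ → β) (w : ℕ → γ) (p : β)
    (n : ℕ) : historySeq next w p (n + 1) =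
      next (List.ofFn fun j : Fin n => (historySeq next w p j, w j)) (historySeq next w p n)
        (w n) := by
  rw [historySeq]

namespace Layered

variable {Q α : Type} {d : ℕ} (A : Layered Q α d)

lemma layer_iterate_μ (q : Q) (k : ℕ) : A.layer (A.μ^[k] q) = max 1 (A.layer q - k) := by
  induction k with
  | zero =>
    have := A.layer_pos q
    simp only [Function.iterate_zero_apply, Nat.sub_zero]
    omega
  | succ k ih =>
    rw [Function.iterate_succ_apply']
    by_cases h : 1 < A.layer (A.μ^[k] q)
    · have := A.μ_layer _ h
      omega
    · rw [A.μ_id _ (by have := A.layer_pos (A.μ^[k] q); omega)]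
      omega

lemma layer_muHat {x : ℕ} {q : Q} (h1 : 1 ≤ x) (h2 : x ≤ A.layer q) :
    A.layer (A.muHat x q) = x := by
  rw [muHat, layer_iterate_μ]
  omega

lemma muHat_of_layer_le {x : ℕ} {q : Q} (h : A.layer q ≤ x) : A.muHat x q = q := by
  rw [muHat, Nat.sub_eq_zero_of_le h, Function.iterate_zero_apply]

lemma μ_muHat_succ {x : ℕ} {q : Q} (h : x < A.layer q) :
    A.μ (A.muHat (x + 1) q) = A.muHat x q := by
  rw [muHat, muHat, show A.layer q - x = A.layer q - (x + 1) + 1 by omega,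
    Function.iterate_succ_apply']

lemma isAncestor_self (q : Q) : A.IsAncestor q q :=
  ⟨le_rfl, A.muHat_of_layer_le le_rfl⟩

-- For `x = 0` the ancestor is the layer-1 state `μ^[layer q] q`, on which `μ` is the identity.
lemma isAncestor_muHat (x : ℕ) (q : Q) : A.IsAncestor (A.muHat x q) q := by
  have hq := A.layer_pos q
  rcases Nat.lt_or_ge (A.layer q) x with hlt | hge
  · rw [A.muHat_of_layer_le hlt.le]
    exact A.isAncestor_self q
  rcases Nat.eq_zero_or_pos x with rfl | hx
  · have h1 : A.layer (A.muHat 1 q) = 1 := A.layer_muHat le_rfl hq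
    have h0 : A.muHat 0 q = A.muHat 1 q := by
      rw [← A.μ_muHat_succ hq, A.μ_id _ h1]
    rw [h0]
    exact ⟨h1.le.trans hq, by rw [h1]⟩
  · rw [IsAncestor, A.layer_muHat hx hge]
    exact ⟨hge, rfl⟩

lemma IsAncestor.μ {s q : Q} (hs : 1 < A.layer s) (hsq : A.IsAncestor s q) :
    A.IsAncestor (A.μ s) q := by
  obtain ⟨hle, hsq⟩ := hsq
  have h := A.μ_layer _ hs
  refine ⟨by omega, ?_⟩
  rw [← A.μ_muHat_succ (by omega : A.layer (A.μ s) < A.layer q), h, hsq]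

lemma exists_isLeaf_isAncestor (r : Q) : ∃ q, A.IsLeaf q ∧ A.IsAncestor r q := by
  by_cases hr : A.IsLeaf r
  · exact ⟨r, hr, A.isAncestor_self r⟩
  obtain ⟨s, hs, rfl⟩ : ∃ s, 1 < A.layer s ∧ A.μ s = r := by
    simpa [IsLeaf] using hr
  have hs_layer := A.μ_layer s hs
  have hs_le := A.layer_le s
  obtain ⟨q, hq, hsq⟩ := exists_isLeaf_isAncestor s
  exact ⟨q, hq, IsAncestor.μ A hs hsq⟩
termination_by d - A.layer r

lemma δ_muHat_of_le {x y : ℕ} {q q' : Q} {a : α} (hx : 1 ≤ x) (hxy : x ≤ y)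
    (hq : y ≤ A.layer q) (hq' : y ≤ A.layer q')
    (h : A.δ (A.muHat y q) a = some (A.muHat y q')) :
    A.δ (A.muHat x q) a = some (A.muHat x q') := by
  induction y, hxy using Nat.le_induction with
  | base => exact h
  | succ y hxy ih =>
    apply ih (by omega) (by omega)
    rw [← A.μ_muHat_succ (by omega : y < A.layer q), ← A.μ_muHat_succ (by omega : y < A.layer q')]
    exact A.μ_morph _ a _ (by rw [A.layer_muHat (by omega) hq]; omega) h

lemma runList_append (q : Q) (u v : List α) :
    A.runList q (u ++ v) = (A.runList q u).bind (A.runList · v) := by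
  induction u generalizing q with
  | nil => rfl
  | cons a u ih =>
    simp only [List.cons_append, runList]
    cases A.δ q a <;> simp [ih]

lemma runList_concat (q : Q) (u : List α) (a : α) :
    A.runList q (u ++ [a]) = (A.runList q u).bind (A.δ · a) := by
  rw [runList_append]
  congr 1
  ext1 r
  simp only [runList]
  cases A.δ r a <;> rfl

lemma layerOf_le_layer (q : Q) (a : α) : A.layerOf q a ≤ A.layer q :=
  Nat.findGreatest_le _

lemma isSome_δ_muHat_one (q : Q) (a : α) : (A.δ (A.muHat 1 q) a).isSome :=
  A.complete1 _ a (A.layer_muHat le_rfl (A.layer_pos q))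

lemma one_le_layerOf (q : Q) (a : α) : 1 ≤ A.layerOf q a :=
  Nat.le_findGreatest (A.layer_pos q) (A.isSome_δ_muHat_one q a)

lemma le_layerOf {q : Q} {a : α} {x : ℕ} (hx : x ≤ A.layer q)
    (h : (A.δ (A.muHat x q) a).isSome) : x ≤ A.layerOf q a :=
  Nat.le_findGreatest hx h

lemma isSome_δ_muHat_layerOf (q : Q) (a : α) :
    (A.δ (A.muHat (A.layerOf q a) q) a).isSome :=
  Nat.findGreatest_spec (P := fun x => (A.δ (A.muHat x q) a).isSome) (A.layer_pos q)
    (A.isSome_δ_muHat_one q a)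

lemma layerOf_le_layer_of_semStep {q q' : Q} {a : α} (h : A.semStep q a q') :
    A.layerOf q a ≤ A.layer q' := by
  by_contra! hlt
  have hl := A.δ_layer _ a _ h.2
  rw [A.muHat_of_layer_le hlt.le,
    A.layer_muHat (A.one_le_layerOf q a) (A.layerOf_le_layer q a)] at hl
  omega

lemma δ_muHat_of_semStep {q q' : Q} {a : α} {x : ℕ} (h : A.semStep q a q') (hx : 1 ≤ x)
    (hxa : x ≤ A.layerOf q a) : A.δ (A.muHat x q) a = some (A.muHat x q') :=
  A.δ_muHat_of_le hx hxa (A.layerOf_le_layer q a) (A.layerOf_le_layer_of_semStep h) h.2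

lemma exists_semStep (q : Q) (a : α) : ∃ q', A.semStep q a q' := by
  obtain ⟨r, hr⟩ := Option.isSome_iff_exists.mp (A.isSome_δ_muHat_layerOf q a)
  have hlr : A.layer r = A.layerOf q a := by
    rw [A.δ_layer _ a _ hr, A.layer_muHat (A.one_le_layerOf q a) (A.layerOf_le_layer q a)]
  obtain ⟨q', hq', -, hrq'⟩ := A.exists_isLeaf_isAncestor r
  refine ⟨q', hq', ?_⟩
  rw [← hlr, hrq']
  rwa [← hlr] at hr

lemma runList_muHat_of_le_runPrios {w : ℕ → α} {ρ : ℕ → Q}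
    (hρ : ∀ i, A.semStep (ρ i) (w i) (ρ (i + 1))) {x : ℕ} (hx : 1 ≤ x) {n : ℕ}
    (hprio : ∀ i < n, x ≤ A.runPrios w ρ i) :
    A.runList (A.muHat x (ρ 0)) (wordPrefix w n) = some (A.muHat x (ρ n)) := by
  induction n with
  | zero => rfl
  | succ n ih =>
    rw [wordPrefix_succ, runList_concat, ih fun i hi => hprio i (by omega)]
    exact A.δ_muHat_of_semStep (hρ n) hx (hprio n (by omega))

/-- `StronglyAcc r w` and `StronglyRej r w` unfold to `Even (A.layer r)` resp. `Odd (A.layer r)`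
together with this condition. -/
def SafeNoEscape (r : Q) (w : ℕ → α) : Prop :=
  A.SafeInf (A.layer r) r w ∧ ∀ (n : ℕ) (p' : Q), A.layer p' = A.layer r + 1 →
    A.runList r (wordPrefix w n) = some (A.μ p') → ¬ A.SafeInf (A.layer p') p' (wordDrop w n)

section Runs

variable {A} {r p : Q} {w : ℕ → α} {ρ : ℕ → Q}

lemma layer_le_runPrios (hr : A.IsAncestor r p) (hsafe : A.SafeInf (A.layer r) r w)
    (hρ : A.IsSemRun w p ρ) (n : ℕ) : A.layer r ≤ A.runPrios w ρ n := by
  induction n using Nat.strong_induction_on with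
  | _ n ih =>
    have hrun := A.runList_muHat_of_le_runPrios hρ.2 (A.layer_pos r) ih
    rw [hρ.1, hr.2] at hrun
    have hδ : (A.δ (A.muHat (A.layer r) (ρ n)) (w n)).isSome := by
      have := hsafe (n + 1)
      rwa [SafeFin, A.muHat_of_layer_le le_rfl, wordPrefix_succ, runList_concat, hrun] at this
    refine A.le_layerOf ?_ hδ
    cases n with
    | zero => exact hρ.1 ▸ hr.1
    | succ k => exact (ih k (by omega)).trans (A.layerOf_le_layer_of_semStep (hρ.2 k))

lemma frequently_runPrios_eq_layer (hr : A.IsAncestor r p) (h : A.SafeNoEscape r w)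
    (hρ : A.IsSemRun w p ρ) : ∀ N, ∃ n, N ≤ n ∧ A.runPrios w ρ n = A.layer r := by
  by_contra! ⟨N, hN⟩
  have hgt : ∀ n, N ≤ n → A.layer r + 1 ≤ A.runPrios w ρ n := fun n hn =>
    lt_of_le_of_ne (layer_le_runPrios hr h.1 hρ n) (hN n hn).symm
  have hN_layer : A.layer r + 1 ≤ A.layer (ρ N) :=
    (hgt N le_rfl).trans (A.layerOf_le_layer _ _)
  set r' := A.muHat (A.layer r + 1) (ρ N)
  have hr' : A.layer r' = A.layer r + 1 := A.layer_muHat (by omega) hN_layer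
  refine h.2 N r' hr' ?_ fun m => ?_
  · have hrun := A.runList_muHat_of_le_runPrios hρ.2 (A.layer_pos r) (n := N)
      fun i _ => layer_le_runPrios hr h.1 hρ i
    rwa [hρ.1, hr.2, ← A.μ_muHat_succ hN_layer] at hrun
  · have hrun : A.runList r' (wordPrefix (wordDrop w N) m) = some _ :=
      A.runList_muHat_of_le_runPrios (w := wordDrop w N) (ρ := fun i => ρ (N + i))
        (fun i => hρ.2 (N + i)) (by omega) fun i _ => hgt (N + i) (by omega)
    rw [SafeFin, hr', A.muHat_of_layer_le hr'.le, hrun]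
    rfl

lemma minInfOften_runPrios_eq_layer (hr : A.IsAncestor r p) (h : A.SafeNoEscape r w)
    (hρ : A.IsSemRun w p ρ) : minInfOften (A.runPrios w ρ) = A.layer r :=
  minInfOften_eq_of_le_of_frequently (layer_le_runPrios hr h.1 hρ) (frequently_runPrios_eq_layer hr h hρ)

end Runs

lemma exists_eveResolver : ∃ σ, A.EveResolver σ :=
  ⟨fun _ q a => (A.exists_semStep q a).choose, fun _ q a _ => (A.exists_semStep q a).choose_spec⟩

lemma exists_isSemRun_consEve {σ : List (Q × α) → Q → α → Q} (hσ : A.EveResolver σ)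
    (w : ℕ → α) (p : Q) : ∃ ρ, A.IsSemRun w p ρ ∧ A.ConsEve σ w ρ := by
  let next h q a := if Odd (A.semPrio q a) then σ h q a else (A.exists_semStep q a).choose
  refine ⟨historySeq next w p, ⟨historySeq_zero .., fun i => ?_⟩, fun i hi => ?_⟩
  · rw [historySeq_succ]
    by_cases hi : Odd (A.semPrio (historySeq next w p i) (w i))
    · simpa only [next, if_pos hi] using hσ _ _ _ hi
    · simpa only [next, if_neg hi] using (A.exists_semStep _ _).choose_spec
  · rw [historySeq_succ]
    exact if_pos hi

end Layered

theorem statement_7_general {Q α : Type} {d : ℕ} (A : Layered Q α d) (p : Q) (x : ℕ) (w : ℕ → α) :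
    (Even x → A.StronglyAcc (A.muHat x p) w → A.SemAccept p w) ∧
    (Odd x → A.StronglyRej (A.muHat x p) w → ¬ A.SemAccept p w) := by
  have hr := A.isAncestor_muHat x p
  constructor
  · rintro - ⟨heven, h⟩
    obtain ⟨σ, hσ⟩ := A.exists_eveResolver
    refine ⟨σ, hσ, fun ρ hρ _ => ?_⟩
    rwa [ParityAccept, A.minInfOften_runPrios_eq_layer hr h hρ]
  · rintro - ⟨hodd, h⟩ ⟨σ, hσ, hwin⟩
    obtain ⟨ρ, hρ, hcons⟩ := A.exists_isSemRun_consEve hσ w p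
    have hpar := hwin ρ hρ hcons
    rw [ParityAccept, A.minInfOften_runPrios_eq_layer hr h hρ] at hpar
    exact Nat.not_even_iff_odd.mpr hodd hpar

/-- Let `p` be a leaf state and `x ≤ layer p` a priority.  If `x` is even
and `w` is strongly accepted by `μ̂_x p`, then `w ∈ L(⟦A⟧, p)`; if `x` is odd and `w` is
strongly rejected by `μ̂_x p`, then `w ∉ L(⟦A⟧, p)`. -/
theorem statement_7 {Q α : Type} [Fintype Q] [Fintype α] [Nonempty α] {d : ℕ} (hd : 1 ≤ d)
    (A : Layered Q α d) (p : Q) (hp : A.IsLeaf p)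
    (x : ℕ) (hx1 : 1 ≤ x) (hx : x ≤ A.layer p) (w : ℕ → α) :
    (Even x → A.StronglyAcc (A.muHat x p) w → A.SemAccept p w) ∧
    (Odd x → A.StronglyRej (A.muHat x p) w → ¬ A.SemAccept p w) :=
  statement_7_general A p x w
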